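/- arXiv:0704.1966 — 2 statements merged into one kernel-verified Lean document; each statement's English description precedes it below -/
import Mathlib

section
/- Let F : 𝔻 → Ω_n be holomorphic (n ≥ 2), let ζ₁, ζ₂ ∈ 𝔻, and set W_j = F(ζ_j). For λ ∈ σ(W_j) let m(λ) be the multiplicity of λ as a root of the minimal polynomial of W_j. Then max{ max_{μ∈σ(W₂)} ∏_{λ∈σ(W₁)} M(μ,λ)^{m(λ)}, max_{λ∈σ(W₁)} ∏_{μ∈σ(W₂)} M(λ,μ)^{m(μ)} } ≤ |ζ₁ − ζ₂| / |1 − conj(ζ₂)ζ₁|, where M(z₁,z₂) = |(z₁ − z₂)/(1 − conj(z₂)z₁)| is the pseudohyperbolic distance. -/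
/-!
Compose `F` with the finite Blaschke product `B` whose zeros are the roots of the minimal
polynomial of `W₁ = F ζ₁`, counted with multiplicity. Writing `B = p / s` with `p` the minimal
polynomial, `G = p(F) s(F)⁻¹` is holomorphic on the disc, vanishes at `ζ₁`, and by spectral
mapping its eigenvalues are the values `B(x)` at eigenvalues `x` of `F`, so they lie in the
closed unit disc. For such a `G` (Globevnik's lemma) dividing out the zero at `ζ₁` gives
`G = b • K`, with `b` the Möbius factor vanishing at `ζ₁`, and the spectrum of `K` stays in the
closed unit disc: apply the maximum principle to the characteristic polynomial coefficients of
`Kᵏ` on circles approaching the boundary, where `|b| → 1`, and let `k → ∞`. Hence every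
eigenvalue `B(μ)` of `G(ζ₂)` has modulus at most `|b(ζ₂)|`, the pseudohyperbolic distance.
-/

open Complex Metric Polynomial

/-- The spectral radius of an n×n complex matrix. -/
noncomputable def specRad {n : ℕ} (A : Matrix (Fin n) (Fin n) ℂ) : ℝ :=
  sSup ((fun z => ‖z‖) '' spectrum ℂ A)

/-- The pseudohyperbolic distance on the unit disc. -/
noncomputable def pseudoDist (z₁ z₂ : ℂ) : ℝ :=
  ‖(z₁ - z₂) / (1 - (starRingEnd ℂ) z₂ * z₁)‖

open Filter Topology

section PseudoDist

variable {a b : ℂ}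

lemma one_sub_conj_mul_ne_zero (ha : ‖a‖ < 1) (hb : ‖b‖ < 1) :
    1 - (starRingEnd ℂ) b * a ≠ 0 := by
  intro h
  have : ‖(starRingEnd ℂ) b * a‖ = 1 := by rw [← sub_eq_zero.1 h, norm_one]
  rw [norm_mul, Complex.norm_conj] at this
  nlinarith [norm_nonneg a, norm_nonneg b]

lemma norm_one_sub_conj_mul_sq_sub_norm_sub_sq (a b : ℂ) :
    ‖1 - (starRingEnd ℂ) b * a‖ ^ 2 - ‖a - b‖ ^ 2 = (1 - ‖a‖ ^ 2) * (1 - ‖b‖ ^ 2) := by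
  simp only [Complex.sq_norm]
  apply Complex.ofReal_injective
  push_cast
  simp only [← Complex.mul_conj, map_sub, map_mul, map_one, Complex.conj_conj]
  ring

lemma norm_sub_le_norm_one_sub_conj_mul (ha : ‖a‖ < 1) (hb : ‖b‖ < 1) :
    ‖a - b‖ ≤ ‖1 - (starRingEnd ℂ) b * a‖ := by
  have h := norm_one_sub_conj_mul_sq_sub_norm_sub_sq a b
  have hprod : 0 ≤ (1 - ‖a‖ ^ 2) * (1 - ‖b‖ ^ 2) := by
    apply mul_nonneg <;> nlinarith [norm_nonneg a, norm_nonneg b]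
  exact le_of_pow_le_pow_left₀ two_ne_zero (norm_nonneg _) (by linarith)

lemma pseudoDist_comm (a b : ℂ) : pseudoDist a b = pseudoDist b a := by
  rw [pseudoDist, pseudoDist, norm_div, norm_div, norm_sub_rev a b,
    ← Complex.norm_conj (1 - (starRingEnd ℂ) a * b)]
  simp only [map_sub, map_one, map_mul, Complex.conj_conj, mul_comm]

lemma pseudoDist_le_one (ha : ‖a‖ < 1) (hb : ‖b‖ < 1) : pseudoDist a b ≤ 1 := by
  rw [pseudoDist, norm_div]
  exact div_le_one_of_le₀ (norm_sub_le_norm_one_sub_conj_mul ha hb) (norm_nonneg _)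

lemma one_sub_pseudoDist_le (ha : ‖a‖ < 1) (hb : ‖b‖ < 1) :
    1 - pseudoDist a b ≤ (1 - ‖a‖ ^ 2) * ((1 + ‖b‖) / (1 - ‖b‖)) := by
  have hd : 1 - ‖b‖ ≤ ‖1 - (starRingEnd ℂ) b * a‖ := by
    calc 1 - ‖b‖ ≤ 1 - ‖b‖ * ‖a‖ := by nlinarith [norm_nonneg a, norm_nonneg b]
      _ = ‖(1 : ℂ)‖ - ‖(starRingEnd ℂ) b * a‖ := by simp
      _ ≤ ‖1 - (starRingEnd ℂ) b * a‖ := norm_sub_norm_le _ _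
  have hb1 : 0 < 1 - ‖b‖ := by linarith
  have hprod : 0 ≤ (1 - ‖a‖ ^ 2) * (1 - ‖b‖ ^ 2) := by
    apply mul_nonneg <;> nlinarith [norm_nonneg a, norm_nonneg b]
  have hsq : 1 - pseudoDist a b ^ 2
      = (1 - ‖a‖ ^ 2) * (1 - ‖b‖ ^ 2) / ‖1 - (starRingEnd ℂ) b * a‖ ^ 2 := by
    rw [pseudoDist, norm_div, div_pow, ← norm_one_sub_conj_mul_sq_sub_norm_sub_sq, sub_div,
      div_self (pow_ne_zero _ (by linarith))]
  have hle : pseudoDist a b ≤ 1 := pseudoDist_le_one ha hb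
  have hnonneg : 0 ≤ pseudoDist a b := norm_nonneg _
  calc 1 - pseudoDist a b ≤ 1 - pseudoDist a b ^ 2 := by nlinarith
    _ = (1 - ‖a‖ ^ 2) * (1 - ‖b‖ ^ 2) / ‖1 - (starRingEnd ℂ) b * a‖ ^ 2 := hsq
    _ ≤ (1 - ‖a‖ ^ 2) * (1 - ‖b‖ ^ 2) / (1 - ‖b‖) ^ 2 := by gcongr
    _ = (1 - ‖a‖ ^ 2) * ((1 + ‖b‖) / (1 - ‖b‖)) := by
        field_simp
        ring

end PseudoDist

section Blaschke

/-- The denominator of the finite Blaschke product `∏_{a ∈ Z} (X - a) / (1 - conj a * X)`. -/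
noncomputable def blaschkeDenom (Z : Multiset ℂ) : ℂ[X] :=
  (Z.map fun a => 1 - C ((starRingEnd ℂ) a) * X).prod

variable {Z : Multiset ℂ}

lemma eval_blaschkeDenom_ne_zero (hZ : ∀ a ∈ Z, ‖a‖ < 1) {x : ℂ} (hx : ‖x‖ < 1) :
    (blaschkeDenom Z).eval x ≠ 0 := by
  simp only [blaschkeDenom, eval_multiset_prod, Multiset.map_map, Function.comp_def, eval_sub,
    eval_one, eval_mul, eval_C, eval_X, ne_eq, Multiset.prod_eq_zero_iff, Multiset.mem_map,
    not_exists, not_and]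
  exact fun a ha h => one_sub_conj_mul_ne_zero hx (hZ a ha) h

lemma norm_eval_div_eval_blaschkeDenom (Z : Multiset ℂ) (x : ℂ) :
    ‖(Z.map (X - C ·)).prod.eval x / (blaschkeDenom Z).eval x‖ = (Z.map (pseudoDist x)).prod := by
  simp only [blaschkeDenom, eval_multiset_prod, Multiset.map_map, Function.comp_def, eval_sub,
    eval_one, eval_mul, eval_C, eval_X, ← Multiset.prod_map_div]
  exact map_multiset_prod (normHom : ℂ →*₀ ℝ) _ |>.trans (by rw [Multiset.map_map]; rfl)

lemma prod_pseudoDist_le_one (hZ : ∀ a ∈ Z, ‖a‖ < 1) {x : ℂ} (hx : ‖x‖ < 1) :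
    (Z.map (pseudoDist x)).prod ≤ 1 := by
  refine (Multiset.prod_induction (fun r : ℝ => 0 ≤ r ∧ r ≤ 1) _ ?_ ⟨zero_le_one, le_rfl⟩ ?_).2
  · exact fun r s hr hs => ⟨mul_nonneg hr.1 hs.1, mul_le_one₀ hr.2 hs.1 hs.2⟩
  · simp only [Multiset.mem_map, forall_exists_index, and_imp, forall_apply_eq_imp_iff₂]
    exact fun a ha => ⟨norm_nonneg _, pseudoDist_le_one hx (hZ a ha)⟩

end Blaschke

lemma spectrum.nontrivial_of_mem {R A : Type*} [CommSemiring R] [Ring A] [Algebra R A] {a : A}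
    {r : R} (h : r ∈ spectrum R a) : Nontrivial A := by
  by_contra hA
  rw [not_nontrivial_iff_subsingleton] at hA
  simp [spectrum.of_subsingleton] at h

lemma Matrix.mem_spectrum_of_mem_roots_minpoly {ι K : Type*} [Fintype ι] [DecidableEq ι]
    [Field K] {A : Matrix ι ι K} {x : K} (hx : x ∈ (minpoly K A).roots) : x ∈ spectrum K A :=
  Matrix.mem_spectrum_iff_isRoot_charpoly.2 ((isRoot_of_mem_roots hx).dvd A.minpoly_dvd_charpoly)

section SpectrumRational

variable {𝕜 A : Type*} [Field 𝕜] [IsAlgClosed 𝕜] [Ring A] [Algebra 𝕜 A] [FiniteDimensional 𝕜 A]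
  [Nontrivial A] {a : A} {p s : 𝕜[X]}

lemma isUnit_aeval_of_forall_eval_ne_zero (h : ∀ x ∈ spectrum 𝕜 a, s.eval x ≠ 0) :
    IsUnit (aeval a s) := by
  by_contra hs
  rw [← spectrum.zero_mem_iff 𝕜, spectrum.map_polynomial_aeval_of_nonempty a s
    (spectrum.nonempty_of_isAlgClosed_of_finiteDimensional 𝕜 a)] at hs
  obtain ⟨x, hx, hx0⟩ := hs
  exact h x hx hx0

lemma mem_spectrum_aeval_mul_inverse_iff (hs : IsUnit (aeval a s)) {η : 𝕜} :
    η ∈ spectrum 𝕜 (aeval a p * Ring.inverse (aeval a s)) ↔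
      ∃ x ∈ spectrum 𝕜 a, p.eval x = η * s.eval x := by
  obtain ⟨u, hu⟩ := hs
  have hfactor : algebraMap 𝕜 A η - aeval a p * Ring.inverse (aeval a s)
      = aeval a (η • s - p) * ↑u⁻¹ := by
    rw [← hu, Ring.inverse_unit, map_sub, map_smul, hu.symm, sub_mul, smul_mul_assoc,
      Units.mul_inv, Algebra.algebraMap_eq_smul_one]
  rw [spectrum.mem_iff, hfactor, Units.isUnit_mul_units, ← spectrum.zero_mem_iff 𝕜,
    spectrum.map_polynomial_aeval_of_nonempty a _
      (spectrum.nonempty_of_isAlgClosed_of_finiteDimensional 𝕜 a)]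
  simp only [Set.mem_image, eval_sub, eval_smul, smul_eq_mul]
  exact exists_congr fun x => and_congr_right fun _ => by rw [sub_eq_zero, eq_comm]

end SpectrumRational

lemma DifferentiableOn.mvPolynomial_eval {𝕜 E σ : Type*} [NontriviallyNormedField 𝕜]
    [NormedAddCommGroup E] [NormedSpace 𝕜 E] {U : Set E} {f : E → σ → 𝕜}
    (hf : ∀ i, DifferentiableOn 𝕜 (f · i) U) (q : MvPolynomial σ 𝕜) :
    DifferentiableOn 𝕜 (fun z => MvPolynomial.eval (f z) q) U := by
  induction q using MvPolynomial.induction_on with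
  | C a => simp [differentiableOn_const]
  | add p q hp hq => simpa only [map_add] using hp.fun_add hq
  | mul_X p i hp => simpa only [map_mul, MvPolynomial.eval_X] using hp.fun_mul (hf i)

section EntrywiseDifferentiable

variable {ι : Type*} {U : Set ℂ}

/-- Matrices carry no global norm, so holomorphy of matrix-valued maps is read entrywise. -/
def EntrywiseDifferentiableOn (U : Set ℂ) (M : ℂ → Matrix ι ι ℂ) : Prop :=
  ∀ i j, DifferentiableOn ℂ (fun z => M z i j) U

namespace EntrywiseDifferentiableOn

variable {M N : ℂ → Matrix ι ι ℂ}

lemma const (A : Matrix ι ι ℂ) : EntrywiseDifferentiableOn U fun _ => A :=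
  fun _ _ => differentiableOn_const _

lemma mono {V : Set ℂ} (hM : EntrywiseDifferentiableOn U M) (hVU : V ⊆ U) :
    EntrywiseDifferentiableOn V M :=
  fun i j => (hM i j).mono hVU

lemma smul {g : ℂ → ℂ} (hg : DifferentiableOn ℂ g U) (hM : EntrywiseDifferentiableOn U M) :
    EntrywiseDifferentiableOn U fun z => g z • M z :=
  fun i j => by simpa only [Matrix.smul_apply, smul_eq_mul] using hg.fun_mul (hM i j)

lemma mul [Fintype ι] (hM : EntrywiseDifferentiableOn U M) (hN : EntrywiseDifferentiableOn U N) :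
    EntrywiseDifferentiableOn U fun z => M z * N z := fun i j => by
  simp only [Matrix.mul_apply]
  exact DifferentiableOn.fun_sum fun k _ => (hM i k).mul (hN k j)

lemma pow [Fintype ι] [DecidableEq ι] (hM : EntrywiseDifferentiableOn U M) (k : ℕ) :
    EntrywiseDifferentiableOn U fun z => M z ^ k := by
  induction k with
  | zero => simpa using const (U := U) (1 : Matrix ι ι ℂ)
  | succ k ih => simpa only [pow_succ] using ih.mul hM

lemma aeval [Fintype ι] [DecidableEq ι] (hM : EntrywiseDifferentiableOn U M) (p : ℂ[X]) :
    EntrywiseDifferentiableOn U fun z => aeval (M z) p := by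
  induction p using Polynomial.induction_on' with
  | add p q hp hq =>
    exact fun i j => by
      simpa only [map_add, Matrix.add_apply] using (hp i j).fun_add (hq i j)
  | monomial k a =>
    simpa only [aeval_monomial, ← Algebra.smul_def] using (hM.pow k).smul (differentiableOn_const a)

lemma charpoly_coeff [Fintype ι] [DecidableEq ι] (hM : EntrywiseDifferentiableOn U M) (j : ℕ) :
    DifferentiableOn ℂ (fun z => (M z).charpoly.coeff j) U := by
  have := DifferentiableOn.mvPolynomial_eval (f := fun z (ij : ι × ι) => M z ij.1 ij.2)
    (fun ij => hM ij.1 ij.2) ((Matrix.charpoly.univ ℂ ι).coeff j)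
  refine this.congr fun z _ => ?_
  rw [MvPolynomial.eval, Matrix.charpoly.univ_coeff_eval₂Hom]
  rfl

lemma det [Fintype ι] [DecidableEq ι] (hM : EntrywiseDifferentiableOn U M) :
    DifferentiableOn ℂ (fun z => (M z).det) U := by
  simpa only [Matrix.det_eq_sign_charpoly_coeff] using
    (differentiableOn_const _).fun_mul (hM.charpoly_coeff 0)

lemma ringInverse [Fintype ι] [DecidableEq ι] (hM : EntrywiseDifferentiableOn U M)
    (hunit : ∀ z ∈ U, IsUnit (M z)) :
    EntrywiseDifferentiableOn U fun z => Ring.inverse (M z) := by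
  intro i j
  simp only [← Matrix.nonsing_inv_eq_ringInverse, Matrix.inv_def, Ring.inverse_eq_inv',
    Matrix.smul_apply, Matrix.adjugate_apply, smul_eq_mul]
  refine (hM.det.inv fun z hz => ?_).fun_mul (det fun a b => ?_)
  · exact ((Matrix.isUnit_iff_isUnit_det _).1 (hunit z hz)).ne_zero
  · by_cases hab : a = j
    · subst hab
      simpa only [Matrix.updateRow_self] using differentiableOn_const _
    · simpa only [Matrix.updateRow_ne hab] using hM a b

lemma dslope {c : ℂ} (hM : EntrywiseDifferentiableOn U M) (hc : U ∈ 𝓝 c) :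
    EntrywiseDifferentiableOn U fun z => Matrix.of fun i j => dslope (M · i j) c z :=
  fun i j => (Complex.differentiableOn_dslope hc).2 (hM i j)

end EntrywiseDifferentiableOn

end EntrywiseDifferentiable

lemma Polynomial.Monic.norm_lt_of_isRoot_of_norm_coeff_le {K : Type*} [NormedDivisionRing K]
    {p : K[X]} (hp : p.Monic) {B : ℝ} (hB : ∀ j, ‖p.coeff j‖ ≤ B) {z : K} (hz : p.IsRoot z) :
    ‖z‖ < B + 1 := by
  set B' : NNReal := ⟨B, (norm_nonneg _).trans (hB 0)⟩
  have hsup : (Finset.range p.natDegree).sup (fun j => ‖p.coeff j‖₊) ≤ B' :=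
    Finset.sup_le fun j _ => NNReal.coe_le_coe.1 (hB j)
  have hz' := IsRoot.norm_lt_cauchyBound hp.ne_zero hz
  rw [cauchyBound, hp.leadingCoeff, nnnorm_one, div_one] at hz'
  exact_mod_cast hz'.trans_le (add_le_add_left hsup 1)

lemma le_of_forall_pow_succ_le_mul_pow {x y C : ℝ} (hy : 0 < y)
    (h : ∀ k : ℕ, x ^ (k + 1) ≤ C * y ^ (k + 1)) : x ≤ y := by
  by_contra! hxy
  have hq : 1 < x / y := (one_lt_div hy).2 hxy
  obtain ⟨k, hk⟩ := pow_unbounded_of_one_lt C hq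
  have hk' : C < (x / y) ^ (k + 1) :=
    hk.trans_le (pow_le_pow_right₀ hq.le k.le_succ)
  rw [div_pow, lt_div_iff₀ (by positivity)] at hk'
  exact (h k).not_gt hk'

section SpectralMaximumPrinciple

variable {ι : Type*} [Fintype ι] [DecidableEq ι]

lemma Matrix.norm_charpoly_coeff_le (A : Matrix ι ι ℂ) {R : ℝ} (hR : 1 ≤ R)
    (hA : ∀ x ∈ spectrum ℂ A, ‖x‖ ≤ R) (j : ℕ) :
    ‖A.charpoly.coeff j‖ ≤ 2 ^ Fintype.card ι * R ^ Fintype.card ι := by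
  have hroots : ∀ z ∈ (A.charpoly.map (RingHom.id ℂ)).roots, ‖z‖ ≤ R := by
    simp only [Polynomial.map_id]
    exact fun z hz => hA z (Matrix.mem_spectrum_iff_isRoot_charpoly.2 (isRoot_of_mem_roots hz))
  have h := coeff_le_of_roots_le j A.charpoly_monic (IsAlgClosed.splits _) hroots
  rw [Polynomial.map_id, A.charpoly_natDegree_eq_dim] at h
  refine h.trans ?_
  rw [mul_comm]
  gcongr
  · exact_mod_cast Nat.choose_le_two_pow _ _
  · exact Nat.sub_le _ _

theorem norm_le_pow_of_mem_spectrum_of_sphere {K : ℂ → Matrix ι ι ℂ} {c : ℂ} {ρ R : ℝ}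
    (hK : EntrywiseDifferentiableOn (closedBall c ρ) K) (hR : 1 ≤ R)
    (hsphere : ∀ ζ ∈ sphere c ρ, ∀ η ∈ spectrum ℂ (K ζ), ‖η‖ ≤ R)
    {ζ₀ : ℂ} (hζ₀ : ζ₀ ∈ ball c ρ) {μ : ℂ} (hμ : μ ∈ spectrum ℂ (K ζ₀)) :
    ‖μ‖ ≤ R ^ Fintype.card ι := by
  set n := Fintype.card ι
  have hρ : ρ ≠ 0 := (pos_of_mem_ball hζ₀).ne'
  refine le_of_forall_pow_succ_le_mul_pow (C := 2 ^ n + 1) (by positivity) fun k => ?_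
  have hcoeff : ∀ j, ‖(K ζ₀ ^ (k + 1)).charpoly.coeff j‖ ≤ 2 ^ n * (R ^ (k + 1)) ^ n := by
    intro j
    refine Complex.norm_le_of_forall_mem_frontier_norm_le isBounded_ball
      (((hK.pow (k + 1)).charpoly_coeff j).diffContOnCl_ball subset_rfl) ?_
      (subset_closure hζ₀)
    rw [frontier_ball c hρ]
    intro ζ hζ
    refine Matrix.norm_charpoly_coeff_le _ (one_le_pow₀ hR) ?_ j
    rw [spectrum.map_pow_of_pos _ k.succ_pos]
    rintro _ ⟨η, hη, rfl⟩
    rw [norm_pow]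
    exact pow_le_pow_left₀ (norm_nonneg _) (hsphere ζ hζ η hη) _
  have hroot := (K ζ₀ ^ (k + 1)).charpoly_monic.norm_lt_of_isRoot_of_norm_coeff_le hcoeff
    (Matrix.mem_spectrum_iff_isRoot_charpoly.1 (spectrum.pow_mem_pow _ _ hμ))
  have hRpow : 1 ≤ (R ^ n) ^ (k + 1) := one_le_pow₀ (one_le_pow₀ hR)
  rw [norm_pow] at hroot
  calc ‖μ‖ ^ (k + 1) ≤ 2 ^ n * (R ^ (k + 1)) ^ n + 1 := hroot.le
    _ ≤ (2 ^ n + 1) * (R ^ n) ^ (k + 1) := by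
      rw [← pow_mul, mul_comm (k + 1), pow_mul]
      nlinarith

lemma norm_mul_pow_le_one_of_le_pseudoDist_on_sphere {K : ℂ → Matrix ι ι ℂ}
    (hK : EntrywiseDifferentiableOn (ball 0 1) K) {a : ℂ}
    (hspec : ∀ ζ ∈ ball (0 : ℂ) 1, ∀ η ∈ spectrum ℂ (K ζ), pseudoDist ζ a * ‖η‖ ≤ 1)
    {ρ r : ℝ} (hρ : ρ < 1) (hr : 0 < r) (hr1 : r ≤ 1)
    (hsphere : ∀ ζ ∈ sphere (0 : ℂ) ρ, r ≤ pseudoDist ζ a)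
    {ζ₀ : ℂ} (hζ₀ : ‖ζ₀‖ < ρ) {μ : ℂ} (hμ : μ ∈ spectrum ℂ (K ζ₀)) :
    ‖μ‖ * r ^ Fintype.card ι ≤ 1 := by
  have hK_sphere : ∀ ζ ∈ sphere (0 : ℂ) ρ, ∀ η ∈ spectrum ℂ (K ζ), ‖η‖ ≤ r⁻¹ := by
    intro ζ hζ η hη
    have hζ1 : ζ ∈ ball (0 : ℂ) 1 := mem_ball_zero_iff.2 (mem_sphere_zero_iff_norm.1 hζ ▸ hρ)
    rw [← one_div, le_div_iff₀ hr]
    calc ‖η‖ * r ≤ pseudoDist ζ a * ‖η‖ := by rw [mul_comm]; gcongr; exact hsphere ζ hζ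
      _ ≤ 1 := hspec ζ hζ1 η hη
  have hμ' := norm_le_pow_of_mem_spectrum_of_sphere (hK.mono (closedBall_subset_ball hρ))
    ((one_le_inv₀ hr).2 hr1) hK_sphere (mem_ball_zero_iff.2 hζ₀) hμ
  rwa [inv_pow, ← one_div, le_div_iff₀ (by positivity)] at hμ'

theorem norm_le_one_of_mem_spectrum_of_pseudoDist_mul_le_one {K : ℂ → Matrix ι ι ℂ}
    (hK : EntrywiseDifferentiableOn (ball 0 1) K) {a : ℂ} (ha : ‖a‖ < 1)
    (hspec : ∀ ζ ∈ ball (0 : ℂ) 1, ∀ η ∈ spectrum ℂ (K ζ), pseudoDist ζ a * ‖η‖ ≤ 1)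
    {ζ₀ : ℂ} (hζ₀ : ζ₀ ∈ ball (0 : ℂ) 1) {μ : ℂ} (hμ : μ ∈ spectrum ℂ (K ζ₀)) : ‖μ‖ ≤ 1 := by
  set C := (1 + ‖a‖) / (1 - ‖a‖)
  have hC : 0 ≤ C := div_nonneg (by positivity) (by linarith)
  have hr : Tendsto (fun ρ : ℝ => 1 - (1 - ρ ^ 2) * C) (𝓝[<] 1) (𝓝 1) := by
    have : Continuous fun ρ : ℝ => 1 - (1 - ρ ^ 2) * C := by fun_prop
    simpa using (this.tendsto 1).mono_left nhdsWithin_le_nhds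
  refine le_of_tendsto (by simpa using (hr.pow (Fintype.card ι)).const_mul ‖μ‖) ?_
  have hmax : max ‖ζ₀‖ ‖a‖ < 1 := max_lt (mem_ball_zero_iff.1 hζ₀) ha
  filter_upwards [Ioo_mem_nhdsLT hmax, hr.eventually (lt_mem_nhds zero_lt_one)]
    with ρ ⟨hρ, hρ1⟩ hpos
  refine norm_mul_pow_le_one_of_le_pseudoDist_on_sphere hK hspec hρ1 hpos ?_ (fun ζ hζ => ?_)
    ((le_max_left _ _).trans_lt hρ) hμ
  · have hρ0 : 0 ≤ ρ := (norm_nonneg ζ₀).trans ((le_max_left _ _).trans hρ.le)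
    have : 0 ≤ (1 - ρ ^ 2) * C := mul_nonneg (by nlinarith) hC
    linarith
  · have hζρ : ‖ζ‖ = ρ := mem_sphere_zero_iff_norm.1 hζ
    have := one_sub_pseudoDist_le (hζρ ▸ hρ1) ha
    rw [hζρ] at this
    linarith

open scoped Pointwise in
theorem norm_le_pseudoDist_of_mem_spectrum_of_eq_zero {H : ℂ → Matrix ι ι ℂ}
    (hH : EntrywiseDifferentiableOn (ball 0 1) H)
    (hspec : ∀ ζ ∈ ball (0 : ℂ) 1, ∀ η ∈ spectrum ℂ (H ζ), ‖η‖ ≤ 1)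
    {ζ₁ ζ₂ : ℂ} (h₁ : ζ₁ ∈ ball (0 : ℂ) 1) (h₂ : ζ₂ ∈ ball (0 : ℂ) 1) (hH₁ : H ζ₁ = 0)
    {ν : ℂ} (hν : ν ∈ spectrum ℂ (H ζ₂)) : ‖ν‖ ≤ pseudoDist ζ₂ ζ₁ := by
  have := spectrum.nontrivial_of_mem hν
  set b : ℂ → ℂ := fun ζ => (ζ - ζ₁) / (1 - (starRingEnd ℂ) ζ₁ * ζ)
  set K : ℂ → Matrix ι ι ℂ := fun ζ =>
    (1 - (starRingEnd ℂ) ζ₁ * ζ) • Matrix.of fun i j => dslope (H · i j) ζ₁ ζ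
  have hK : EntrywiseDifferentiableOn (ball 0 1) K :=
    (hH.dslope (isOpen_ball.mem_nhds h₁)).smul (by fun_prop)
  have hHK : ∀ ζ ∈ ball (0 : ℂ) 1, H ζ = b ζ • K ζ := by
    intro ζ hζ
    have hd := one_sub_conj_mul_ne_zero (mem_ball_zero_iff.1 hζ) (mem_ball_zero_iff.1 h₁)
    ext i j
    have hij := sub_smul_dslope (H · i j) ζ₁ ζ
    simp only [hH₁, Matrix.zero_apply, sub_zero, smul_eq_mul] at hij
    simp only [b, K, Matrix.smul_apply, Matrix.of_apply, smul_eq_mul, ← hij]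
    rw [div_mul_eq_mul_div, mul_div_assoc, mul_div_cancel_left₀ _ hd]
  have hσ : ∀ ζ ∈ ball (0 : ℂ) 1, spectrum ℂ (H ζ) = b ζ • spectrum ℂ (K ζ) := fun ζ hζ => by
    rw [hHK ζ hζ, spectrum.smul_eq_smul _ _
      (spectrum.nonempty_of_isAlgClosed_of_finiteDimensional ℂ _)]
  have hKspec : ∀ ζ ∈ ball (0 : ℂ) 1, ∀ η ∈ spectrum ℂ (K ζ), pseudoDist ζ ζ₁ * ‖η‖ ≤ 1 := by
    intro ζ hζ η hη
    have hmem : b ζ • η ∈ spectrum ℂ (H ζ) := hσ ζ hζ ▸ Set.smul_mem_smul_set hη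
    rw [pseudoDist, ← norm_smul]
    exact hspec ζ hζ _ hmem
  obtain ⟨μ, hμ, rfl⟩ : ν ∈ b ζ₂ • spectrum ℂ (K ζ₂) := hσ ζ₂ h₂ ▸ hν
  rw [norm_smul]
  calc ‖b ζ₂‖ * ‖μ‖ ≤ ‖b ζ₂‖ * 1 := by
        gcongr
        exact norm_le_one_of_mem_spectrum_of_pseudoDist_mul_le_one hK (mem_ball_zero_iff.1 h₁)
          hKspec h₂ hμ
    _ = pseudoDist ζ₂ ζ₁ := mul_one _

end SpectralMaximumPrinciple

lemma norm_lt_one_of_specRad_lt_one {n : ℕ} {A : Matrix (Fin n) (Fin n) ℂ} (h : specRad A < 1)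
    {x : ℂ} (hx : x ∈ spectrum ℂ A) : ‖x‖ < 1 :=
  (le_csSup (A.finite_spectrum.image _).bddAbove ⟨x, hx, rfl⟩).trans_lt h

section Schwarz

variable {ι : Type*} [Fintype ι] [DecidableEq ι] {F : ℂ → Matrix ι ι ℂ}
  {ζ₁ ζ₂ μ : ℂ}

theorem prod_pseudoDist_le_of_aeval_eq_zero (hF : EntrywiseDifferentiableOn (ball 0 1) F)
    (hdisc : ∀ ζ ∈ ball (0 : ℂ) 1, ∀ x ∈ spectrum ℂ (F ζ), ‖x‖ < 1)
    {Z : Multiset ℂ} (hZ : ∀ a ∈ Z, ‖a‖ < 1) (h₁ : ζ₁ ∈ ball (0 : ℂ) 1)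
    (h₂ : ζ₂ ∈ ball (0 : ℂ) 1) (hann : aeval (F ζ₁) (Z.map (X - C ·)).prod = 0)
    (hμ : μ ∈ spectrum ℂ (F ζ₂)) :
    (Z.map (pseudoDist μ)).prod ≤ pseudoDist ζ₁ ζ₂ := by
  have := spectrum.nontrivial_of_mem hμ
  set p := (Z.map (X - C ·)).prod
  set s := blaschkeDenom Z
  have hs : ∀ ζ ∈ ball (0 : ℂ) 1, IsUnit (aeval (F ζ) s) := fun ζ hζ =>
    isUnit_aeval_of_forall_eval_ne_zero fun x hx =>
      eval_blaschkeDenom_ne_zero hZ (hdisc ζ hζ x hx)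
  set G : ℂ → Matrix ι ι ℂ := fun ζ => aeval (F ζ) p * Ring.inverse (aeval (F ζ) s)
  have hG : EntrywiseDifferentiableOn (ball 0 1) G :=
    (hF.aeval p).mul ((hF.aeval s).ringInverse hs)
  have hGspec : ∀ ζ ∈ ball (0 : ℂ) 1, ∀ η ∈ spectrum ℂ (G ζ), ‖η‖ ≤ 1 := by
    intro ζ hζ η hη
    obtain ⟨x, hx, hpx⟩ := (mem_spectrum_aeval_mul_inverse_iff (hs ζ hζ)).1 hη
    have hsx := eval_blaschkeDenom_ne_zero hZ (hdisc ζ hζ x hx)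
    rw [← mul_div_cancel_right₀ η hsx, ← hpx, norm_eval_div_eval_blaschkeDenom]
    exact prod_pseudoDist_le_one hZ (hdisc ζ hζ x hx)
  have hG₁ : G ζ₁ = 0 := by simp only [G, hann, zero_mul]
  have hsμ := eval_blaschkeDenom_ne_zero hZ (hdisc ζ₂ h₂ μ hμ)
  have hη : p.eval μ / s.eval μ ∈ spectrum ℂ (G ζ₂) :=
    (mem_spectrum_aeval_mul_inverse_iff (hs ζ₂ h₂)).2 ⟨μ, hμ, (div_mul_cancel₀ _ hsμ).symm⟩
  rw [← norm_eval_div_eval_blaschkeDenom, pseudoDist_comm]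
  exact norm_le_pseudoDist_of_mem_spectrum_of_eq_zero hG hGspec h₁ h₂ hG₁ hη

theorem prod_pseudoDist_pow_rootMultiplicity_minpoly_le
    (hF : EntrywiseDifferentiableOn (ball 0 1) F)
    (hdisc : ∀ ζ ∈ ball (0 : ℂ) 1, ∀ x ∈ spectrum ℂ (F ζ), ‖x‖ < 1)
    (h₁ : ζ₁ ∈ ball (0 : ℂ) 1) (h₂ : ζ₂ ∈ ball (0 : ℂ) 1) (hμ : μ ∈ spectrum ℂ (F ζ₂)) :
    ∏ l ∈ (minpoly ℂ (F ζ₁)).roots.toFinset,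
      pseudoDist μ l ^ (minpoly ℂ (F ζ₁)).rootMultiplicity l ≤ pseudoDist ζ₁ ζ₂ := by
  have hq := (IsAlgClosed.splits (minpoly ℂ (F ζ₁))).eq_prod_roots_of_monic
    (minpoly.monic (Algebra.IsIntegral.isIntegral _))
  simp_rw [← count_roots, ← Finset.prod_multiset_map_count]
  refine prod_pseudoDist_le_of_aeval_eq_zero hF hdisc
    (fun a ha => hdisc ζ₁ h₁ a (Matrix.mem_spectrum_of_mem_roots_minpoly ha)) h₁ h₂ ?_ hμ
  rw [← hq]
  exact minpoly.aeval ℂ _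

end Schwarz

theorem schwarz_spectral_unit_ball_general {n : ℕ}
    (F : ℂ → Matrix (Fin n) (Fin n) ℂ)
    (hol : ∀ i j, DifferentiableOn ℂ (fun ζ => F ζ i j) (Metric.ball (0 : ℂ) 1))
    (hrange : ∀ ζ ∈ Metric.ball (0 : ℂ) 1, specRad (F ζ) < 1)
    (ζ₁ ζ₂ : ℂ) (hζ₁ : ζ₁ ∈ Metric.ball (0 : ℂ) 1) (hζ₂ : ζ₂ ∈ Metric.ball (0 : ℂ) 1) :
    (∀ μ ∈ spectrum ℂ (F ζ₂),
      ∏ l ∈ (minpoly ℂ (F ζ₁)).roots.toFinset,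
        pseudoDist μ l ^ ((minpoly ℂ (F ζ₁)).rootMultiplicity l) ≤ pseudoDist ζ₁ ζ₂) ∧
    (∀ l ∈ spectrum ℂ (F ζ₁),
      ∏ μ ∈ (minpoly ℂ (F ζ₂)).roots.toFinset,
        pseudoDist l μ ^ ((minpoly ℂ (F ζ₂)).rootMultiplicity μ) ≤ pseudoDist ζ₁ ζ₂) := by
  have hdisc : ∀ ζ ∈ ball (0 : ℂ) 1, ∀ x ∈ spectrum ℂ (F ζ), ‖x‖ < 1 :=
    fun ζ hζ x hx => norm_lt_one_of_specRad_lt_one (hrange ζ hζ) hx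
  refine ⟨fun μ hμ => prod_pseudoDist_pow_rootMultiplicity_minpoly_le hol hdisc hζ₁ hζ₂ hμ,
    fun l hl => ?_⟩
  rw [pseudoDist_comm]
  exact prod_pseudoDist_pow_rootMultiplicity_minpoly_le hol hdisc hζ₂ hζ₁ hl

/-- Schwarz lemma for the spectral unit ball: for holomorphic F : 𝔻 → Ω_n (n ≥ 2),
with W_j = F(ζ_j), both quantities
max_{μ∈σ(W₂)} ∏_{λ∈σ(W₁)} M(μ,λ)^{m(λ)} and max_{λ∈σ(W₁)} ∏_{μ∈σ(W₂)} M(λ,μ)^{m(μ)}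
are bounded by the pseudohyperbolic distance between ζ₁ and ζ₂, where m(·) denotes
multiplicity in the relevant minimal polynomial. -/
theorem schwarz_spectral_unit_ball {n : ℕ} (hn : 2 ≤ n)
    (F : ℂ → Matrix (Fin n) (Fin n) ℂ)
    (hol : ∀ i j, DifferentiableOn ℂ (fun ζ => F ζ i j) (Metric.ball (0 : ℂ) 1))
    (hrange : ∀ ζ ∈ Metric.ball (0 : ℂ) 1, specRad (F ζ) < 1)
    (ζ₁ ζ₂ : ℂ) (hζ₁ : ζ₁ ∈ Metric.ball (0 : ℂ) 1) (hζ₂ : ζ₂ ∈ Metric.ball (0 : ℂ) 1) :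
    (∀ μ ∈ spectrum ℂ (F ζ₂),
      ∏ l ∈ (minpoly ℂ (F ζ₁)).roots.toFinset,
        pseudoDist μ l ^ ((minpoly ℂ (F ζ₁)).rootMultiplicity l) ≤ pseudoDist ζ₁ ζ₂) ∧
    (∀ l ∈ spectrum ℂ (F ζ₁),
      ∏ μ ∈ (minpoly ℂ (F ζ₂)).roots.toFinset,
        pseudoDist l μ ^ ((minpoly ℂ (F ζ₂)).rootMultiplicity μ) ≤ pseudoDist ζ₁ ζ₂) :=
  schwarz_spectral_unit_ball_general F hol hrange ζ₁ ζ₂ hζ₁ hζ₂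
end

section
/- Let A be a complex unital Banach algebra and f : 𝔻 → A holomorphic. Suppose there is R₀ ∈ (0,1) such that for every R ∈ (R₀, 1) and every ζ with |ζ| = R, the spectral radius satisfies r(f(ζ)) < 1/R. Then r(f(ζ)) ≤ 1 for all ζ ∈ 𝔻. -/
/-!
Instead of the subharmonicity of `ζ ↦ r(f ζ)`, use the maximum modulus principle for powers of
`f`. On the circle `‖ζ‖ = R`, Gelfand's formula turns `r(f ζ) < 1/R` into `‖f ζ ^ n‖ < R⁻ⁿ` for
some `n` depending on `ζ`; by compactness one common multiple `N` of these exponents works on the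
whole circle, and the maximum modulus principle for the holomorphic `f ^ N` carries `‖f ^ N‖ ≤ R⁻ᴺ`
into the disc, so that `r(f ζ₀) ≤ 1/R` whenever `‖ζ₀‖ ≤ R`. Finally let `R → 1`.
-/

open Metric Filter

open scoped Topology NNReal ENNReal

namespace spectrum

section NormedField

variable {𝕜 A : Type*} [NormedField 𝕜] [NormedRing A] [NormedAlgebra 𝕜 A] [CompleteSpace A]

theorem spectralRadius_le_nnnorm' (a : A) : spectralRadius 𝕜 a ≤ ‖a‖₊ := by
  refine (spectralRadius_le_liminf_pow_nnnorm_pow_one_div 𝕜 a).trans <|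
    liminf_le_of_frequently_le' <| Eventually.frequently ?_
  filter_upwards [eventually_ne_atTop 0] with n hn
  calc (‖a ^ n‖₊ : ℝ≥0∞) ^ (1 / n : ℝ) ≤ ((‖a‖₊ ^ n : ℝ≥0) : ℝ≥0∞) ^ (1 / n : ℝ) := by
        gcongr
        exact nnnorm_pow_le' a (Nat.pos_of_ne_zero hn)
    _ = ‖a‖₊ := by
        rw [ENNReal.coe_pow, one_div, ← ENNReal.rpow_natCast, ← ENNReal.rpow_mul,
          mul_inv_cancel₀ (by exact_mod_cast hn), ENNReal.rpow_one]

theorem spectralRadius_le_of_nnnorm_pow_le {a : A} {c : ℝ≥0} {N : ℕ} (hN : N ≠ 0)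
    (h : ‖a ^ N‖₊ ≤ c ^ N) : spectralRadius 𝕜 a ≤ c := by
  rw [← ENNReal.pow_le_pow_left_iff hN]
  calc spectralRadius 𝕜 a ^ N ≤ spectralRadius 𝕜 (a ^ N) := spectralRadius_pow_le a N hN
    _ ≤ ‖a ^ N‖₊ := spectralRadius_le_nnnorm' _
    _ ≤ (c : ℝ≥0∞) ^ N := mod_cast h

end NormedField

variable {A : Type*} [NormedRing A] [NormedAlgebra ℂ A] [CompleteSpace A]

theorem eventually_nnnorm_pow_lt_of_spectralRadius_lt {a : A} {c : ℝ≥0}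
    (h : spectralRadius ℂ a < c) : ∀ᶠ n in atTop, ‖a ^ n‖₊ < c ^ n := by
  filter_upwards [(pow_nnnorm_pow_one_div_tendsto_nhds_spectralRadius a).eventually_lt_const h,
    eventually_ne_atTop 0] with n hn hn0
  rw [one_div, ENNReal.rpow_inv_lt_iff (by positivity), ENNReal.rpow_natCast] at hn
  exact_mod_cast hn

end spectrum

theorem nnnorm_pow_le_of_dvd {A : Type*} [SeminormedRing A] {a : A} {c : ℝ≥0} {n N : ℕ}
    (h : ‖a ^ n‖₊ ≤ c ^ n) (hnN : n ∣ N) (hN : N ≠ 0) : ‖a ^ N‖₊ ≤ c ^ N := by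
  obtain ⟨k, rfl⟩ := hnN
  have hk : 0 < k := Nat.pos_of_ne_zero (right_ne_zero_of_mul hN)
  calc ‖a ^ (n * k)‖₊ = ‖(a ^ n) ^ k‖₊ := by rw [pow_mul]
    _ ≤ ‖a ^ n‖₊ ^ k := nnnorm_pow_le' _ hk
    _ ≤ (c ^ n) ^ k := by gcongr
    _ = c ^ (n * k) := (pow_mul c n k).symm

theorem IsCompact.exists_nnnorm_pow_le_of_spectralRadius_lt {X A : Type*} [TopologicalSpace X]
    [NormedRing A] [NormedAlgebra ℂ A] [CompleteSpace A] {K : Set X} (hK : IsCompact K)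
    {g : X → A} (hg : ContinuousOn g K) {c : ℝ≥0} (h : ∀ x ∈ K, spectralRadius ℂ (g x) < c) :
    ∃ N ≠ 0, ∀ x ∈ K, ‖g x ^ N‖₊ ≤ c ^ N := by
  have hpow : ∀ x ∈ K, ∃ n ≠ 0, ‖g x ^ n‖₊ < c ^ n := fun x hx =>
    ((eventually_ne_atTop 0).and
      (spectrum.eventually_nnnorm_pow_lt_of_spectralRadius_lt (h x hx))).exists
  choose! n hn0 hn using hpow
  obtain ⟨t, htK, hcover⟩ := hK.elim_nhdsWithin_subcover (fun x => {y | ‖g y ^ n x‖₊ < c ^ n x})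
    fun x hx => ((hg x hx).pow (n x)).nnnorm.eventually (gt_mem_nhds (hn x hx))
  have hN : ∏ x ∈ t, n x ≠ 0 := Finset.prod_ne_zero_iff.mpr fun x hx => hn0 x (htK x hx)
  refine ⟨_, hN, fun y hy => ?_⟩
  obtain ⟨x, hxt, hyx⟩ := Set.mem_iUnion₂.mp (hcover hy)
  exact nnnorm_pow_le_of_dvd hyx.le (Finset.dvd_prod_of_mem n hxt) hN

theorem spectralRadius_le_of_forall_mem_sphere {A : Type*} [NormedRing A] [NormedAlgebra ℂ A]
    [CompleteSpace A] {f : ℂ → A} {c : ℂ} {R : ℝ} (hf : DifferentiableOn ℂ f (closedBall c R))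
    {C : ℝ≥0} (h : ∀ ζ ∈ sphere c R, spectralRadius ℂ (f ζ) < C) :
    ∀ z ∈ closedBall c R, spectralRadius ℂ (f z) ≤ C := by
  obtain ⟨N, hN, hbound⟩ :=
    (isCompact_sphere c R).exists_nnnorm_pow_le_of_spectralRadius_lt
      (hf.continuousOn.mono sphere_subset_closedBall) h
  rintro z hz
  rcases ball_union_sphere.symm.subset hz with hz | hz
  · refine spectrum.spectralRadius_le_of_nnnorm_pow_le hN ?_
    have hmax : ‖f z ^ N‖ ≤ (C : ℝ) ^ N :=
      Complex.norm_le_of_forall_mem_frontier_norm_le isBounded_ball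
        ((hf.pow N).mono closure_ball_subset_closedBall).diffContOnCl
        (fun ζ hζ => mod_cast hbound ζ (frontier_ball_subset_sphere hζ)) (subset_closure hz)
    exact_mod_cast hmax
  · exact (h z hz).le

/-- If f : 𝔻 → A is holomorphic into a complex unital Banach algebra and, for all R
close enough to 1 and all |ζ| = R, the spectral radius of f(ζ) is < 1/R, then
r(f(ζ)) ≤ 1 throughout the disc. -/
theorem spectralRadius_le_one_of_boundary_bound {A : Type*} [NormedRing A]
    [NormedAlgebra ℂ A] [CompleteSpace A] (f : ℂ → A)
    (hf : DifferentiableOn ℂ f (Metric.ball (0 : ℂ) 1))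
    (R₀ : ℝ) (hR₀ : R₀ ∈ Set.Ioo (0 : ℝ) 1)
    (hbound : ∀ R ∈ Set.Ioo R₀ 1, ∀ ζ : ℂ, ‖ζ‖ = R →
      spectralRadius ℂ (f ζ) < ENNReal.ofReal (1 / R)) :
    ∀ ζ ∈ Metric.ball (0 : ℂ) 1, spectralRadius ℂ (f ζ) ≤ 1 := by
  intro ζ₀ hζ₀
  rw [mem_ball_zero_iff] at hζ₀
  -- `ENNReal.ofReal (1 / R)` is by definition the coercion of `(1 / R).toNNReal`
  have hbound_near_one : ∀ R ∈ Set.Ioo (max R₀ ‖ζ₀‖) 1,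
      spectralRadius ℂ (f ζ₀) ≤ ENNReal.ofReal (1 / R) := fun R ⟨hMR, hR1⟩ =>
    spectralRadius_le_of_forall_mem_sphere
      (hf.mono (closedBall_subset_ball hR1))
      (fun ζ hζ => hbound R ⟨(le_max_left _ _).trans_lt hMR, hR1⟩ ζ
        (mem_sphere_zero_iff_norm.mp hζ))
      ζ₀ (mem_closedBall_zero_iff.mpr ((le_max_right _ _).trans hMR.le))
  have htend : Tendsto (fun R : ℝ => ENNReal.ofReal (1 / R)) (𝓝[<] 1) (𝓝 1) := by
    have hcont : ContinuousAt (fun R : ℝ => ENNReal.ofReal (1 / R)) 1 :=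
      ENNReal.continuous_ofReal.continuousAt.comp
        (continuousAt_const.div continuousAt_id one_ne_zero)
    simpa using hcont.tendsto.mono_left nhdsWithin_le_nhds
  refine ge_of_tendsto htend ?_
  filter_upwards [Ioo_mem_nhdsLT (max_lt hR₀.2 hζ₀)] using hbound_near_one
end
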